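/- Let p be an odd prime, r = (p−1)/2, and λ ∈ 𝔽_p. Then ∑_{a ∈ 𝔽_p} ( a·(a−1)·(a−λ) )^{r} = (−1)^{r+1} · ∑_{i=0}^{r} (binom(r,i))² · λ^i in 𝔽_p, where binom(r,i) denotes the binomial coefficient reduced mod p. (The polynomial H(λ) = ∑_{i=0}^{r} binom(r,i)² λ^i is the Deuring polynomial, whose roots are the λ for which the elliptic curve y² = x(x−1)(x−λ) is supersingular.) -/

import Mathlib

/-!
Expand `(a(a-1)(a-λ))^r` as a polynomial in `a` of degree `3r < 2(p-1)`. Summed over `𝔽_p`,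
a monomial `a^i` with `0 ≤ i < 2(p-1)` contributes `-1` if `i = p-1` and `0` otherwise, so the sum
is minus the coefficient of `a^{2r}`, i.e. minus the coefficient of `a^r` in `(a-1)^r (a-λ)^r`,
which is `(-1)^r ∑ binom(r,i)² λ^i` by `binom(r,i) = binom(r,r-i)`.
-/

open Polynomial Finset

namespace FiniteField

variable {K : Type*} [Field K] [Fintype K]

theorem sum_pow_of_ne_zero {i : ℕ} (hi : i ≠ 0) :
    ∑ x : K, x ^ i = if Fintype.card K - 1 ∣ i then -1 else 0 := by
  classical
  let φ : Kˣ ↪ K := ⟨(↑), Units.val_injective⟩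
  rw [← sum_pow_units K i]
  refine .trans (sum_subset (subset_univ (univ.map φ)) fun x _ hx ↦ ?_).symm (sum_map _ _ _)
  obtain rfl : x = 0 := by
    by_contra h0
    exact hx (mem_map_of_mem φ (mem_univ (Units.mk0 x h0)))
  exact zero_pow hi

theorem sum_pow_of_lt_two_mul {i : ℕ} (hi : i < 2 * (Fintype.card K - 1)) :
    ∑ x : K, x ^ i = if i = Fintype.card K - 1 then -1 else 0 := by
  have hq : 1 < Fintype.card K := Fintype.one_lt_card
  rcases lt_or_ge i (Fintype.card K - 1) with hlt | hge
  · rw [sum_pow_lt_card_sub_one K i hlt, if_neg hlt.ne]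
  · have hdvd : Fintype.card K - 1 ∣ i ↔ i = Fintype.card K - 1 :=
      ⟨fun h ↦ Nat.eq_of_dvd_of_lt_two_mul (by omega) h hi, fun h ↦ h ▸ dvd_rfl⟩
    rw [sum_pow_of_ne_zero (by omega), if_congr hdvd rfl rfl]

theorem sum_eval_of_natDegree_lt {f : K[X]} (hf : f.natDegree < 2 * (Fintype.card K - 1)) :
    ∑ x : K, f.eval x = -f.coeff (Fintype.card K - 1) := by
  have hq : 1 < Fintype.card K := Fintype.one_lt_card
  calc ∑ x : K, f.eval x
      = ∑ i ∈ range (2 * (Fintype.card K - 1)), f.coeff i * ∑ x : K, x ^ i := by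
        simp_rw [eval_eq_sum_range' hf, mul_sum]
        exact sum_comm
    _ = ∑ i ∈ range (2 * (Fintype.card K - 1)),
          f.coeff i * if i = Fintype.card K - 1 then -1 else 0 :=
        sum_congr rfl fun i hi ↦ by rw [sum_pow_of_lt_two_mul (mem_range.mp hi)]
    _ = -f.coeff (Fintype.card K - 1) := by simp [hq]

end FiniteField

namespace Polynomial

variable {R : Type*} [CommRing R]

theorem coeff_X_add_C_pow_mul_X_add_C_pow (a b : R) (n : ℕ) :
    ((X + C a) ^ n * (X + C b) ^ n).coeff n =
      ∑ i ∈ range (n + 1), (n.choose i : R) ^ 2 * a ^ (n - i) * b ^ i := by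
  rw [coeff_mul, Nat.sum_antidiagonal_eq_sum_range_succ_mk]
  refine sum_congr rfl fun i hi ↦ ?_
  have hi : i ≤ n := Nat.lt_succ_iff.mp (mem_range.mp hi)
  rw [coeff_X_add_C_pow, coeff_X_add_C_pow, Nat.sub_sub_self hi, Nat.choose_symm hi]
  ring

theorem coeff_X_sub_C_pow_mul_X_sub_C_pow (a b : R) (n : ℕ) :
    ((X - C a) ^ n * (X - C b) ^ n).coeff n =
      (-1) ^ n * ∑ i ∈ range (n + 1), (n.choose i : R) ^ 2 * a ^ (n - i) * b ^ i := by
  simp_rw [sub_eq_add_neg, ← C_neg, coeff_X_add_C_pow_mul_X_add_C_pow, mul_sum]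
  refine sum_congr rfl fun i hi ↦ ?_
  have hi : i ≤ n := Nat.lt_succ_iff.mp (mem_range.mp hi)
  rw [neg_pow, neg_pow b, ← pow_sub_mul_pow (-1 : R) hi]
  ring

end Polynomial

/-- Deuring polynomial identity: for an odd prime `p`, `r = (p-1)/2` and `λ ∈ 𝔽_p`,
`∑_{a ∈ 𝔽_p} (a(a-1)(a-λ))^r = (-1)^(r+1) · ∑_{i=0}^{r} binom(r,i)² λ^i`. -/
theorem sum_cubic_pow_eq_deuring (p : ℕ) [Fact p.Prime] (hp : p ≠ 2)
    (r : ℕ) (hr : r = (p - 1) / 2) (lam : ZMod p) :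
    ∑ a : ZMod p, (a * (a - 1) * (a - lam)) ^ r =
      (-1) ^ (r + 1) *
        ∑ i ∈ Finset.range (r + 1), ((r.choose i : ZMod p)) ^ 2 * lam ^ i := by
  have hp1 : p - 1 = r + r := by
    have := Nat.odd_iff.mp ((Fact.out : p.Prime).odd_of_ne_two hp)
    omega
  have hr0 : r ≠ 0 := by have := (Fact.out : p.Prime).two_le; omega
  let f : (ZMod p)[X] := X ^ r * ((X - C 1) ^ r * (X - C lam) ^ r)
  have hf : f.natDegree < 2 * (Fintype.card (ZMod p) - 1) := by
    have : f.natDegree ≤ 3 * r := by unfold f; compute_degree; omega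
    rw [ZMod.card]
    omega
  calc ∑ a : ZMod p, (a * (a - 1) * (a - lam)) ^ r = ∑ a : ZMod p, f.eval a := by
        simp [f, mul_pow, mul_assoc]
    _ = -f.coeff (r + r) := by rw [FiniteField.sum_eval_of_natDegree_lt hf, ZMod.card, hp1]
    _ = _ := by
        rw [coeff_X_pow_mul, coeff_X_sub_C_pow_mul_X_sub_C_pow]
        simp [pow_succ]
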